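/- arXiv:2309.10753 — 2 statements merged into one kernel-verified Lean document; each statement's English description precedes it below -/
import Mathlib

section
/- Let G be a weighted directed acyclic graph (or more generally a digraph), and let W be the matrix indexed by vertex sets I (rows) and J (columns) whose (i,j) entry is the sum of weights of all walks of bounded length from j to i (each walk's weight being the product of its edge weights). Then for square submatrices, det W(I,J) = Σ over vertex-disjoint path systems (linkings) L from J onto I of sign(π_L)·w(L), provided any two paths from J to I that share a vertex admit the tail-swapping involution; i.e., the Lindström–Gessel–Viennot identity holds: path systems that are not vertex-disjoint cancel in pairs in the determinant expansion. -/
/-!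
Expanding the determinant, and each entry of `∑ₖ Mᵏ` as a sum over walks, writes `det W(I, J)` as
a signed sum over systems of walks from `J (σ a)` to `I a`; only systems along nonzero edges
contribute. As all such walks have length at most `L`, pumping a repeated vertex shows that they
are paths. On systems in which two paths meet, take the least index `a` of a path meeting another
one, the last position `s` at which it does, the least other path `b` through that vertex and the
position `t` of the vertex on it, and exchange the initial segments of `a` and `b` there. This
flips the sign, keeps the weight, and the swapped system yields the same choice with `s` and `t`
exchanged, so it is an involution. The surviving systems are the vertex-disjoint ones: linkings.
-/

open scoped Classical

/-- Data for a path system (potential linking) of size `r` in a weighted digraph on `V`: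
a permutation matching sinks to sources, and for each index a path, encoded by its
length (at most `Fintype.card V`, enough for any simple path) together with its
sequence of vertices. -/
abbrev LinkDatum (V : Type*) [Fintype V] (r : ℕ) : Type _ :=
  Equiv.Perm (Fin r) × ((a : Fin r) → Σ k : Fin (Fintype.card V + 1), (Fin ((k : ℕ) + 1) → V))

/-- `x` is a linking from `J` onto `I` in the digraph with weight matrix `M`
(an edge from `b` to `a` exists iff `M a b ≠ 0`): each path is simple (injective),
starts at `J (σ a)`, ends at `I a`, uses only edges of the graph, and distinct
paths are vertex-disjoint. -/
def IsLinking {V : Type*} [Fintype V] (M : Matrix V V ℝ) {r : ℕ}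
    (I J : Fin r ↪ V) (x : LinkDatum V r) : Prop :=
  (∀ a : Fin r, Function.Injective (x.2 a).2) ∧
  (∀ a : Fin r, (x.2 a).2 0 = J (x.1 a)) ∧
  (∀ a : Fin r, (x.2 a).2 (Fin.last _) = I a) ∧
  (∀ a : Fin r, ∀ t : Fin ((x.2 a).1 : ℕ),
      M ((x.2 a).2 t.succ) ((x.2 a).2 t.castSucc) ≠ 0) ∧
  (∀ a b : Fin r, a ≠ b → ∀ s t, (x.2 a).2 s ≠ (x.2 b).2 t)

/-- The weight of a path system: the product over all paths of the product of its
edge weights. -/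
def linkWeight {V : Type*} [Fintype V] (M : Matrix V V ℝ) {r : ℕ}
    (x : LinkDatum V r) : ℝ :=
  ∏ a : Fin r, ∏ t : Fin ((x.2 a).1 : ℕ),
    M ((x.2 a).2 t.succ) ((x.2 a).2 t.castSucc)

open Finset

noncomputable section

theorem Matrix.pow_apply_eq_sum_walks {V R : Type*} [Fintype V] [DecidableEq V] [CommSemiring R]
    (M : Matrix V V R) (k : ℕ) (i j : V) :
    (M ^ k) i j = ∑ f : Fin (k + 1) → V with f 0 = j ∧ f (Fin.last k) = i,
      ∏ t : Fin k, M (f t.succ) (f t.castSucc) := by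
  rw [sum_filter]
  induction k generalizing i with
  | zero =>
    rw [← (Equiv.funUnique (Fin 1) V).symm.sum_comp]
    simp [Matrix.one_apply, ite_and, eq_comm]
  | succ k ih =>
    rw [pow_succ', Matrix.mul_apply, ← (Fin.snocEquiv fun _ => V).sum_comp, Fintype.sum_prod_type,
      sum_comm]
    simp only [ih, mul_sum]
    rw [sum_comm]
    refine sum_congr rfl fun g _ => ?_
    simp [Fin.snocEquiv, Fin.prod_univ_castSucc, Fin.succ_castSucc, -Fin.castSucc_succ, mul_comm,
      ite_and]

namespace LGV

variable {V R : Type*}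

section Zero

variable [Zero R] (M : Matrix V V R)

def IsWalk (j i : V) (k : ℕ) (f : ℕ → V) : Prop :=
  f 0 = j ∧ f k = i ∧ ∀ n < k, M (f (n + 1)) (f n) ≠ 0

def spliceFun (f g : ℕ → V) (s t : ℕ) (n : ℕ) : V :=
  if n < t then g n else f (s + (n - t))

lemma spliceFun_of_le {f g : ℕ → V} {s t n : ℕ} (hfg : f s = g t) (hn : n ≤ t) :
    spliceFun f g s t n = g n := by
  unfold spliceFun
  split_ifs
  · rfl
  · rw [show n = t by omega, Nat.sub_self, add_zero, hfg]

lemma spliceFun_of_ge {f g : ℕ → V} {s t n : ℕ} (hn : t ≤ n) :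
    spliceFun f g s t n = f (s + (n - t)) :=
  if_neg (by omega)

variable {M}

theorem IsWalk.splice {j i j' i' : V} {k l s t : ℕ} {f g : ℕ → V} (hf : IsWalk M j i k f)
    (hg : IsWalk M j' i' l g) (hfg : f s = g t) (hs : s ≤ k) (ht : t ≤ l) :
    IsWalk M j' i (t + (k - s)) (spliceFun f g s t) := by
  obtain ⟨hf0, hfk, hfM⟩ := hf
  obtain ⟨hg0, -, hgM⟩ := hg
  refine ⟨by rw [spliceFun_of_le hfg (Nat.zero_le t), hg0], ?_, fun n hn => ?_⟩
  · rw [spliceFun_of_ge (by omega), ← hfk]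
    congr 1
    omega
  · rcases Nat.lt_or_ge n t with hnt | htn
    · rw [spliceFun_of_le hfg hnt, spliceFun_of_le hfg hnt.le]
      exact hgM n (by omega)
    · rw [spliceFun_of_ge htn, spliceFun_of_ge (by omega),
        show s + (n + 1 - t) = s + (n - t) + 1 by omega]
      exact hfM _ (by omega)

/-- Splicing a walk into itself at a repeated vertex runs once more through the cycle between the
two visits. -/
theorem IsWalk.exists_length_ge {j i : V} {k s t : ℕ} {f : ℕ → V} (hf : IsWalk M j i k f)
    (hst : s < t) (htk : t ≤ k) (hfst : f s = f t) (n : ℕ) :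
    ∃ l ≥ n, ∃ g, IsWalk M j i l g := by
  suffices ∀ n, ∃ l ≥ n, t ≤ l ∧ ∃ g, IsWalk M j i l g ∧ g s = g t by
    obtain ⟨l, hl, -, g, hg, -⟩ := this n
    exact ⟨l, hl, g, hg⟩
  intro n
  induction n with
  | zero => exact ⟨k, Nat.zero_le k, htk, f, hf, hfst⟩
  | succ n ih =>
    obtain ⟨l, hnl, htl, g, hg, hgst⟩ := ih
    refine ⟨t + (l - s), by omega, by omega, spliceFun g g s t,
      hg.splice hg hgst (by omega) htl, ?_⟩
    rw [spliceFun_of_le hgst hst.le, spliceFun_of_le hgst le_rfl]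
    exact hgst

theorem IsWalk.injOn {j i : V} {k N : ℕ} {f : ℕ → V}
    (hB : ∀ l g, IsWalk M j i l g → l ≤ N) (hf : IsWalk M j i k f) :
    Set.InjOn f (Set.Iic k) := by
  have key : ∀ s t, s < t → t ≤ k → f s ≠ f t := fun s t hst htk hfst => by
    obtain ⟨l, hl, g, hg⟩ := hf.exists_length_ge hst htk hfst (N + 1)
    have := hB l g hg
    omega
  intro s hs t ht hfst
  simp only [Set.mem_Iic] at hs ht
  rcases lt_trichotomy s t with hst | rfl | hts
  · exact absurd hfst (key s t hst ht)
  · rfl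
  · exact absurd hfst.symm (key t s hts hs)

end Zero

def edgeProd [CommMonoid R] (M : Matrix V V R) (f : ℕ → V) (m n : ℕ) : R :=
  ∏ u ∈ Ico m n, M (f (u + 1)) (f u)

section CommMonoid

variable [CommMonoid R] (M : Matrix V V R)

lemma edgeProd_mul_edgeProd (f : ℕ → V) {m n p : ℕ} (hmn : m ≤ n) (hnp : n ≤ p) :
    edgeProd M f m n * edgeProd M f n p = edgeProd M f m p :=
  prod_Ico_consecutive _ hmn hnp

lemma edgeProd_spliceFun {f g : ℕ → V} {s t k : ℕ} (hfg : f s = g t) :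
    edgeProd M (spliceFun f g s t) 0 (t + (k - s)) = edgeProd M g 0 t * edgeProd M f s k := by
  rw [← edgeProd_mul_edgeProd M _ (Nat.zero_le t) (Nat.le_add_right t _)]
  congr 1
  · refine prod_congr rfl fun u hu => ?_
    rw [mem_Ico] at hu
    rw [spliceFun_of_le hfg (by omega), spliceFun_of_le hfg (by omega)]
  · unfold edgeProd
    rw [prod_Ico_eq_prod_range, prod_Ico_eq_prod_range, Nat.add_sub_cancel_left]
    refine prod_congr rfl fun u _ => ?_
    rw [spliceFun_of_ge (by omega), spliceFun_of_ge (by omega)]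
    congr 2 <;> omega

end CommMonoid

abbrev Walk (V : Type*) (N : ℕ) := Σ k : Fin (N + 1), (Fin ((k : ℕ) + 1) → V)

namespace Walk

variable {N : ℕ}

def len (w : Walk V N) : ℕ := w.1

/-- The vertex at position `n`, read as the endpoint for `n > w.len`. -/
def vert (w : Walk V N) (n : ℕ) : V := w.2 ⟨min n w.1, by omega⟩

def ofFun (k : ℕ) (f : ℕ → V) : Walk V N := ⟨⟨min k N, by omega⟩, fun u => f u⟩

def weight [CommMonoid R] (M : Matrix V V R) (w : Walk V N) : R := edgeProd M w.vert 0 w.len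

lemma vert_coe (w : Walk V N) (u : Fin ((w.1 : ℕ) + 1)) : w.vert u = w.2 u := by
  exact congrArg w.2 (Fin.ext (min_eq_left (Nat.lt_succ_iff.mp u.isLt)))

lemma vert_min_len (w : Walk V N) (n : ℕ) : w.vert (min n w.len) = w.vert n := by
  exact congrArg w.2 (Fin.ext (by simp [len]))

lemma len_le (w : Walk V N) : w.len ≤ N := Nat.lt_succ_iff.mp w.1.isLt

lemma len_ofFun {k : ℕ} (f : ℕ → V) (hk : k ≤ N) : (ofFun k f : Walk V N).len = k :=
  min_eq_left hk

lemma vert_ofFun {k : ℕ} (f : ℕ → V) (hk : k ≤ N) (n : ℕ) :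
    (ofFun k f : Walk V N).vert n = f (min n k) := by
  simp [ofFun, vert, min_eq_left hk]

lemma vert_ofFun_of_le {k n : ℕ} (f : ℕ → V) (hk : k ≤ N) (hn : n ≤ k) :
    (ofFun k f : Walk V N).vert n = f n := by
  rw [vert_ofFun f hk, min_eq_left hn]

theorem ext_vert {w w' : Walk V N} (hlen : w.len = w'.len)
    (hvert : ∀ n ≤ w.len, w.vert n = w'.vert n) : w = w' := by
  obtain ⟨⟨k, hk⟩, f⟩ := w
  obtain ⟨⟨k', hk'⟩, f'⟩ := w'
  obtain rfl : k = k' := hlen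
  congr
  funext u
  have := hvert u (Nat.lt_succ_iff.mp u.isLt)
  rwa [vert_coe, vert_coe] at this

lemma weight_ofFun [CommMonoid R] (M : Matrix V V R) {k : ℕ} (f : ℕ → V) (hk : k ≤ N) :
    (ofFun k f : Walk V N).weight M = edgeProd M f 0 k := by
  unfold weight edgeProd
  rw [len_ofFun f hk]
  refine prod_congr rfl fun u hu => ?_
  rw [mem_Ico] at hu
  rw [vert_ofFun_of_le f hk (by omega), vert_ofFun_of_le f hk (by omega)]

def splice (P Q : Walk V N) (s t : ℕ) : Walk V N :=
  ofFun (t + (P.len - s)) (spliceFun P.vert Q.vert s t)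

section splice

variable {P Q : Walk V N} {s t : ℕ}

lemma len_splice (hN : t + (P.len - s) ≤ N) : (P.splice Q s t).len = t + (P.len - s) :=
  len_ofFun _ hN

lemma vert_splice_of_le (hN : t + (P.len - s) ≤ N) (hPQ : P.vert s = Q.vert t) {n : ℕ}
    (hn : n ≤ t) : (P.splice Q s t).vert n = Q.vert n := by
  rw [splice, vert_ofFun_of_le _ hN (by omega), spliceFun_of_le hPQ hn]

lemma vert_splice_of_ge (hN : t + (P.len - s) ≤ N) {n : ℕ} (htn : t ≤ n)
    (hn : n ≤ t + (P.len - s)) : (P.splice Q s t).vert n = P.vert (s + (n - t)) := by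
  rw [splice, vert_ofFun_of_le _ hN hn, spliceFun_of_ge htn]

lemma isWalk_ofFun [Zero R] {M : Matrix V V R} {j i : V} {k : ℕ} {f : ℕ → V} (hk : k ≤ N) :
    IsWalk M j i (ofFun k f : Walk V N).len (ofFun k f : Walk V N).vert ↔ IsWalk M j i k f := by
  simp only [IsWalk, len_ofFun f hk, vert_ofFun f hk, Nat.zero_min, min_self]
  refine and_congr_right' (and_congr_right' (forall₂_congr fun n hn => ?_))
  rw [min_eq_left hn, min_eq_left hn.le]

theorem isWalk_splice [Zero R] {M : Matrix V V R} {j i j' i' : V}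
    (hPw : IsWalk M j i P.len P.vert) (hQw : IsWalk M j' i' Q.len Q.vert)
    (hPQ : P.vert s = Q.vert t) (hs : s ≤ P.len) (ht : t ≤ Q.len) (hP : t + (P.len - s) ≤ N) :
    IsWalk M j' i (P.splice Q s t).len (P.splice Q s t).vert :=
  (isWalk_ofFun hP).2 (hPw.splice hQw hPQ hs ht)

theorem splice_splice_splice (hPQ : P.vert s = Q.vert t) (hs : s ≤ P.len)
    (hP : t + (P.len - s) ≤ N) (hQ : s + (Q.len - t) ≤ N) :
    (P.splice Q s t).splice (Q.splice P t s) t s = P := by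
  have hN : s + ((P.splice Q s t).len - t) ≤ N := by
    rw [len_splice hP]
    exact le_trans (by omega) P.len_le
  have hlen : ((P.splice Q s t).splice (Q.splice P t s) t s).len = P.len := by
    rw [len_splice hN, len_splice hP]
    omega
  refine ext_vert hlen fun n hn => ?_
  rw [hlen] at hn
  rcases Nat.le_total n s with hns | hsn
  · rw [vert_splice_of_le hN (by rw [vert_splice_of_le hQ hPQ.symm le_rfl,
      vert_splice_of_ge hP le_rfl (by omega), Nat.sub_self, add_zero]) hns,
      vert_splice_of_le hQ hPQ.symm hns]
  · rw [vert_splice_of_ge hN hsn (by rw [len_splice hP]; omega),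
      vert_splice_of_ge hP (by omega) (by omega)]
    congr 1
    omega

theorem weight_splice_mul_weight_splice [CommMonoid R] (M : Matrix V V R)
    (hPQ : P.vert s = Q.vert t) (hs : s ≤ P.len) (ht : t ≤ Q.len)
    (hP : t + (P.len - s) ≤ N) (hQ : s + (Q.len - t) ≤ N) :
    (P.splice Q s t).weight M * (Q.splice P t s).weight M = P.weight M * Q.weight M := by
  rw [splice, splice, weight_ofFun M _ hP, weight_ofFun M _ hQ, edgeProd_spliceFun M hPQ,
    edgeProd_spliceFun M hPQ.symm, weight, weight,
    ← edgeProd_mul_edgeProd M P.vert (Nat.zero_le s) hs,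
    ← edgeProd_mul_edgeProd M Q.vert (Nat.zero_le t) ht]
  ac_rfl

end splice

def rebound {N' : ℕ} (w : Walk V N) : Walk V N' := ofFun w.len w.vert

section rebound

variable {N' : ℕ} {w : Walk V N}

lemma len_rebound (h : w.len ≤ N') : (w.rebound : Walk V N').len = w.len := len_ofFun _ h

lemma vert_rebound (h : w.len ≤ N') : (w.rebound : Walk V N').vert = w.vert := by
  funext n
  rw [rebound, vert_ofFun _ h, vert_min_len]

lemma rebound_rebound (h : w.len ≤ N') : ((w.rebound : Walk V N').rebound : Walk V N) = w :=
  ext_vert (by rw [len_rebound (by rw [len_rebound h]; exact w.len_le), len_rebound h])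
    fun n _ => by rw [vert_rebound (by rw [len_rebound h]; exact w.len_le), vert_rebound h]

end rebound

lemma vert_zero (w : Walk V N) : w.vert 0 = w.2 0 := vert_coe w 0

lemma vert_len (w : Walk V N) : w.vert w.len = w.2 (Fin.last _) := vert_coe w (Fin.last _)

lemma prod_fin_eq_weight [CommMonoid R] (M : Matrix V V R) (w : Walk V N) :
    ∏ t : Fin w.1, M (w.2 t.succ) (w.2 t.castSucc) = w.weight M := by
  rw [weight, edgeProd, Nat.Ico_zero_eq_range, ← Fin.prod_univ_eq_prod_range]
  refine Fintype.prod_congr _ _ fun t => ?_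
  rw [← vert_coe, ← vert_coe]
  rfl

lemma forall_fin_edge_iff [Zero R] (M : Matrix V V R) (w : Walk V N) :
    (∀ t : Fin w.1, M (w.2 t.succ) (w.2 t.castSucc) ≠ 0) ↔
      ∀ n < w.len, M (w.vert (n + 1)) (w.vert n) ≠ 0 := by
  simp [← vert_coe, Fin.forall_iff, len]

lemma injective_iff_injOn (w : Walk V N) :
    Function.Injective w.2 ↔ Set.InjOn w.vert (Set.Iic w.len) := by
  simp [Function.Injective, Set.InjOn, ← vert_coe, Fin.forall_iff, Fin.ext_iff, len]

lemma len_lt_card [Fintype V] {w : Walk V N} (hw : Set.InjOn w.vert (Set.Iic w.len)) :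
    w.len < Fintype.card V := by
  have := card_le_card_of_injOn w.vert (s := Iic w.len) (t := univ) (fun _ _ => mem_univ _)
    (by simpa using hw)
  simp only [Nat.card_Iic, card_univ] at this
  omega

end Walk

open Walk in
theorem sum_pow_apply_eq_sum_walk [Fintype V] [DecidableEq V] [CommSemiring R]
    (M : Matrix V V R) (N : ℕ) (i j : V) :
    (∑ k ∈ range (N + 1), M ^ k) i j =
      ∑ w : Walk V N, if w.vert 0 = j ∧ w.vert w.len = i then w.weight M else 0 := by
  simp_rw [Matrix.sum_apply, Matrix.pow_apply_eq_sum_walks, sum_filter]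
  rw [← Fin.sum_univ_eq_sum_range (fun k => ∑ f : Fin (k + 1) → V,
    if f 0 = j ∧ f (Fin.last k) = i then ∏ t : Fin k, M (f t.succ) (f t.castSucc) else 0),
    Fintype.sum_sigma]
  simp only [vert_zero, vert_len, ← prod_fin_eq_weight]

abbrev System (V : Type*) (r N : ℕ) := Equiv.Perm (Fin r) × (Fin r → Walk V N)

def WalksBoundedBy [Zero R] {r : ℕ} (M : Matrix V V R) (I J : Fin r → V) (N : ℕ) : Prop :=
  ∀ a b k f, IsWalk M (J b) (I a) k f → k ≤ N

theorem walksBoundedBy_of_forall_fin [Zero R] {r L : ℕ} {M : Matrix V V R} {I J : Fin r → V}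
    (hBound : ∀ k : ℕ, L < k → ∀ f : Fin (k + 1) → V,
      (∀ t : Fin k, M (f t.succ) (f t.castSucc) ≠ 0) →
      ¬(f 0 ∈ Set.range J ∧ f (Fin.last k) ∈ Set.range I)) :
    WalksBoundedBy M I J L := by
  rintro a b k f ⟨hf0, hfk, hf⟩
  by_contra! hk
  exact hBound k hk (fun u => f u) (fun t => hf t t.isLt) ⟨⟨b, hf0.symm⟩, ⟨a, hfk.symm⟩⟩

namespace System

variable {r N : ℕ}

def signedWeight [CommRing R] (M : Matrix V V R) (x : System V r N) : R :=
  ((Equiv.Perm.sign x.1 : ℤ) : R) * ∏ a, (x.2 a).weight M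

def IsAdmissible [Zero R] (M : Matrix V V R) (I J : Fin r → V) (x : System V r N) : Prop :=
  ∀ a, IsWalk M (J (x.1 a)) (I a) (x.2 a).len (x.2 a).vert

def MeetsAt (x : System V r N) (a : Fin r) (n : ℕ) : Prop :=
  ∃ b ≠ a, ∃ m ≤ (x.2 b).len, (x.2 b).vert m = (x.2 a).vert n

def IsDisjoint (x : System V r N) : Prop :=
  ∀ a, ∀ n ≤ (x.2 a).len, ¬ x.MeetsAt a n

theorem det_eq_sum_isAdmissible [Fintype V] [DecidableEq V] [CommRing R] (M : Matrix V V R)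
    (N : ℕ) (I J : Fin r → V) :
    ((∑ k ∈ range (N + 1), M ^ k).submatrix I J).det =
      ∑ x : System V r N with x.IsAdmissible M I J, x.signedWeight M := by
  have hexpand : ((∑ k ∈ range (N + 1), M ^ k).submatrix I J).det =
      ∑ x : System V r N with
        ∀ a, (x.2 a).vert 0 = J (x.1 a) ∧ (x.2 a).vert (x.2 a).len = I a, x.signedWeight M := by
    rw [← Matrix.det_transpose, Matrix.det_apply', sum_filter, Fintype.sum_prod_type]
    refine sum_congr rfl fun σ _ => ?_
    simp only [Matrix.transpose_apply, Matrix.submatrix_apply, sum_pow_apply_eq_sum_walk,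
      prod_univ_sum, Fintype.piFinset_univ, prod_ite_zero, mem_univ, true_implies, mul_sum,
      signedWeight, mul_ite, mul_zero]
  rw [hexpand]
  refine (sum_subset (fun x hx => ?_) fun x hx hnot => ?_).symm
  · simp only [mem_filter, mem_univ, true_and] at hx ⊢
    exact fun a => ⟨(hx a).1, (hx a).2.1⟩
  · simp only [mem_filter, mem_univ, true_and] at hx hnot
    simp only [IsAdmissible, IsWalk, not_forall] at hnot
    obtain ⟨a, ha⟩ := hnot
    obtain ⟨n, hn, hzero⟩ :
        ∃ n < (x.2 a).len, M ((x.2 a).vert (n + 1)) ((x.2 a).vert n) = 0 := by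
      by_contra! h
      exact ha ⟨(hx a).1, (hx a).2, h⟩
    refine mul_eq_zero_of_right _ (prod_eq_zero (mem_univ a) ?_)
    exact prod_eq_zero (s := Ico 0 (x.2 a).len) (i := n) (by simpa using hn) hzero

def swapAt (x : System V r N) (a b : Fin r) (s t : ℕ) : System V r N :=
  (x.1 * Equiv.swap a b,
    Function.update (Function.update x.2 a ((x.2 a).splice (x.2 b) s t)) b
      ((x.2 b).splice (x.2 a) t s))

structure CanSwapAt (x : System V r N) (a b : Fin r) (s t : ℕ) : Prop where
  ne : a ≠ b
  vert_eq : (x.2 a).vert s = (x.2 b).vert t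
  le_len_left : s ≤ (x.2 a).len
  le_len_right : t ≤ (x.2 b).len
  len_left_le : t + ((x.2 a).len - s) ≤ N
  len_right_le : s + ((x.2 b).len - t) ≤ N

section swapAt

variable {x : System V r N} {a b : Fin r} {s t : ℕ}

lemma swapAt_fst_apply_left : (x.swapAt a b s t).1 a = x.1 b := by
  simp [swapAt]

lemma swapAt_fst_apply_right : (x.swapAt a b s t).1 b = x.1 a := by
  simp [swapAt]

lemma swapAt_fst_apply_of_ne {c : Fin r} (hca : c ≠ a) (hcb : c ≠ b) :
    (x.swapAt a b s t).1 c = x.1 c := by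
  simp [swapAt, Equiv.swap_apply_of_ne_of_ne hca hcb]

lemma swapAt_snd_left (hab : a ≠ b) : (x.swapAt a b s t).2 a = (x.2 a).splice (x.2 b) s t := by
  simp [swapAt, hab]

lemma swapAt_snd_right : (x.swapAt a b s t).2 b = (x.2 b).splice (x.2 a) t s := by
  simp [swapAt]

lemma swapAt_snd_of_ne {c : Fin r} (hca : c ≠ a) (hcb : c ≠ b) :
    (x.swapAt a b s t).2 c = x.2 c := by
  simp [swapAt, hca, hcb]

variable (hc : x.CanSwapAt a b s t)
include hc

lemma len_swapAt_left : ((x.swapAt a b s t).2 a).len = t + ((x.2 a).len - s) := by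
  rw [swapAt_snd_left hc.ne, Walk.len_splice hc.len_left_le]

lemma len_swapAt_right : ((x.swapAt a b s t).2 b).len = s + ((x.2 b).len - t) := by
  rw [swapAt_snd_right, Walk.len_splice hc.len_right_le]

lemma vert_swapAt_left_of_le {n : ℕ} (hn : n ≤ t) :
    ((x.swapAt a b s t).2 a).vert n = (x.2 b).vert n := by
  rw [swapAt_snd_left hc.ne, Walk.vert_splice_of_le hc.len_left_le hc.vert_eq hn]

lemma vert_swapAt_left_of_ge {n : ℕ} (htn : t ≤ n) (hn : n ≤ t + ((x.2 a).len - s)) :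
    ((x.swapAt a b s t).2 a).vert n = (x.2 a).vert (s + (n - t)) := by
  rw [swapAt_snd_left hc.ne, Walk.vert_splice_of_ge hc.len_left_le htn hn]

lemma vert_swapAt_right_of_le {n : ℕ} (hn : n ≤ s) :
    ((x.swapAt a b s t).2 b).vert n = (x.2 a).vert n := by
  rw [swapAt_snd_right, Walk.vert_splice_of_le hc.len_right_le hc.vert_eq.symm hn]

lemma vert_swapAt_right_of_ge {n : ℕ} (hsn : s ≤ n) (hn : n ≤ s + ((x.2 b).len - t)) :
    ((x.swapAt a b s t).2 b).vert n = (x.2 b).vert (t + (n - s)) := by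
  rw [swapAt_snd_right, Walk.vert_splice_of_ge hc.len_right_le hsn hn]

lemma exists_vert_eq_of_swapAt {d : Fin r} {m : ℕ} (hm : m ≤ ((x.swapAt a b s t).2 d).len) :
    ∃ e, (e = d ∨ e = a ∨ e = b) ∧
      ∃ k ≤ (x.2 e).len, (x.2 e).vert k = ((x.swapAt a b s t).2 d).vert m := by
  by_cases hda : d = a
  · subst hda
    rw [len_swapAt_left hc] at hm
    rcases le_total m t with hmt | htm
    · exact ⟨b, Or.inr (Or.inr rfl), m, hmt.trans hc.le_len_right,
        (vert_swapAt_left_of_le hc hmt).symm⟩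
    · exact ⟨d, Or.inl rfl, _, by have := hc.le_len_left; omega,
        (vert_swapAt_left_of_ge hc htm hm).symm⟩
  by_cases hdb : d = b
  · subst hdb
    rw [len_swapAt_right hc] at hm
    rcases le_total m s with hms | hsm
    · exact ⟨a, Or.inr (Or.inl rfl), m, hms.trans hc.le_len_left,
        (vert_swapAt_right_of_le hc hms).symm⟩
    · exact ⟨d, Or.inl rfl, _, by have := hc.le_len_right; omega,
        (vert_swapAt_right_of_ge hc hsm hm).symm⟩
  rw [swapAt_snd_of_ne hda hdb] at hm ⊢
  exact ⟨d, Or.inl rfl, m, hm, rfl⟩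

theorem swapAt_swapAt : (x.swapAt a b s t).swapAt a b t s = x := by
  refine Prod.ext (by simp [swapAt, mul_assoc]) (funext fun c => ?_)
  by_cases hca : c = a
  · subst hca
    rw [swapAt_snd_left hc.ne, swapAt_snd_left hc.ne, swapAt_snd_right,
      Walk.splice_splice_splice hc.vert_eq hc.le_len_left hc.len_left_le hc.len_right_le]
  by_cases hcb : c = b
  · subst hcb
    rw [swapAt_snd_right, swapAt_snd_right, swapAt_snd_left hc.ne,
      Walk.splice_splice_splice hc.vert_eq.symm hc.le_len_right hc.len_right_le hc.len_left_le]
  rw [swapAt_snd_of_ne hca hcb, swapAt_snd_of_ne hca hcb]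

theorem isAdmissible_swapAt [Zero R] {M : Matrix V V R} {I J : Fin r → V}
    (hx : x.IsAdmissible M I J) : (x.swapAt a b s t).IsAdmissible M I J := by
  intro c
  by_cases hca : c = a
  · subst hca
    rw [swapAt_fst_apply_left, swapAt_snd_left hc.ne]
    exact Walk.isWalk_splice (hx c) (hx b) hc.vert_eq hc.le_len_left hc.le_len_right
      hc.len_left_le
  by_cases hcb : c = b
  · subst hcb
    rw [swapAt_fst_apply_right, swapAt_snd_right]
    exact Walk.isWalk_splice (hx c) (hx a) hc.vert_eq.symm hc.le_len_right hc.le_len_left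
      hc.len_right_le
  rw [swapAt_fst_apply_of_ne hca hcb, swapAt_snd_of_ne hca hcb]
  exact hx c

theorem signedWeight_swapAt [CommRing R] (M : Matrix V V R) :
    (x.swapAt a b s t).signedWeight M = - x.signedWeight M := by
  have hprod : ∏ c, ((x.swapAt a b s t).2 c).weight M = ∏ c, (x.2 c).weight M := by
    rw [← prod_sdiff (subset_univ {a, b}),
      ← prod_sdiff (subset_univ {a, b}) (f := fun c => (x.2 c).weight M), prod_pair hc.ne,
      prod_pair hc.ne, swapAt_snd_left hc.ne, swapAt_snd_right,
      Walk.weight_splice_mul_weight_splice M hc.vert_eq hc.le_len_left hc.le_len_right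
        hc.len_left_le hc.len_right_le]
    refine congrArg (· * _) (prod_congr rfl fun c hc' => ?_)
    simp only [mem_sdiff, mem_insert, mem_singleton, not_or] at hc'
    rw [swapAt_snd_of_ne hc'.2.1 hc'.2.2]
  rw [signedWeight, signedWeight, hprod, swapAt, Equiv.Perm.sign_mul, Equiv.Perm.sign_swap hc.ne]
  push_cast
  ring

end swapAt

section choice

variable (x : System V r N)

def meetingPaths : Finset (Fin r) := {a | ∃ n ≤ (x.2 a).len, x.MeetsAt a n}

def meetingPositions (a : Fin r) : Finset ℕ := {n ∈ Iic (x.2 a).len | x.MeetsAt a n}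

def partners (a : Fin r) (v : V) : Finset (Fin r) :=
  {b | b ≠ a ∧ ∃ m ≤ (x.2 b).len, (x.2 b).vert m = v}

def visits (b : Fin r) (v : V) : Finset ℕ := {m ∈ Iic (x.2 b).len | (x.2 b).vert m = v}

variable {x}

@[simp] lemma mem_meetingPaths {a : Fin r} :
    a ∈ x.meetingPaths ↔ ∃ n ≤ (x.2 a).len, x.MeetsAt a n := by
  simp [meetingPaths]

@[simp] lemma mem_meetingPositions {a : Fin r} {n : ℕ} :
    n ∈ x.meetingPositions a ↔ n ≤ (x.2 a).len ∧ x.MeetsAt a n := by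
  simp [meetingPositions]

@[simp] lemma mem_partners {a b : Fin r} {v : V} :
    b ∈ x.partners a v ↔ b ≠ a ∧ ∃ m ≤ (x.2 b).len, (x.2 b).vert m = v := by
  simp [partners]

@[simp] lemma mem_visits {b : Fin r} {v : V} {m : ℕ} :
    m ∈ x.visits b v ↔ m ≤ (x.2 b).len ∧ (x.2 b).vert m = v := by
  simp [visits]

variable (h : ¬ x.IsDisjoint)
include h

lemma meetingPaths_nonempty : x.meetingPaths.Nonempty := by
  simp only [IsDisjoint, not_forall, not_not] at h
  obtain ⟨a, n, hn, hmeet⟩ := h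
  exact ⟨a, mem_meetingPaths.2 ⟨n, hn, hmeet⟩⟩

variable (x) in
def pivot : Fin r := x.meetingPaths.min' (meetingPaths_nonempty h)

lemma meetingPositions_nonempty : (x.meetingPositions (x.pivot h)).Nonempty := by
  obtain ⟨n, hn, hmeet⟩ := mem_meetingPaths.1 (min'_mem _ (meetingPaths_nonempty h))
  exact ⟨n, mem_meetingPositions.2 ⟨hn, hmeet⟩⟩

variable (x) in
def pivotPos : ℕ := (x.meetingPositions (x.pivot h)).max' (meetingPositions_nonempty h)

variable (x) in
def pivotVert : V := (x.2 (x.pivot h)).vert (x.pivotPos h)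

lemma pivotPos_le_len : x.pivotPos h ≤ (x.2 (x.pivot h)).len :=
  (mem_meetingPositions.1 (max'_mem _ _)).1

lemma meetsAt_pivotPos : x.MeetsAt (x.pivot h) (x.pivotPos h) :=
  (mem_meetingPositions.1 (max'_mem _ _)).2

lemma partners_nonempty : (x.partners (x.pivot h) (x.pivotVert h)).Nonempty := by
  obtain ⟨b, hb, m, hm, hv⟩ := meetsAt_pivotPos h
  exact ⟨b, mem_partners.2 ⟨hb, m, hm, hv⟩⟩

variable (x) in
def partner : Fin r := (x.partners (x.pivot h) (x.pivotVert h)).min' (partners_nonempty h)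

lemma partner_ne_pivot : x.partner h ≠ x.pivot h := (mem_partners.1 (min'_mem _ _)).1

lemma visits_nonempty : (x.visits (x.partner h) (x.pivotVert h)).Nonempty := by
  obtain ⟨m, hm, hv⟩ := (mem_partners.1 (min'_mem _ (partners_nonempty h))).2
  exact ⟨m, mem_visits.2 ⟨hm, hv⟩⟩

variable (x) in
def partnerPos : ℕ := (x.visits (x.partner h) (x.pivotVert h)).min' (visits_nonempty h)

lemma partnerPos_le_len : x.partnerPos h ≤ (x.2 (x.partner h)).len :=
  (mem_visits.1 (min'_mem _ _)).1

lemma vert_partnerPos : (x.2 (x.partner h)).vert (x.partnerPos h) = x.pivotVert h :=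
  (mem_visits.1 (min'_mem _ _)).2

lemma pivot_lt_partner : x.pivot h < x.partner h := by
  refine lt_of_le_of_ne (min'_le _ _ (mem_meetingPaths.2 ⟨_, partnerPos_le_len h, ?_⟩))
    (partner_ne_pivot h).symm
  exact ⟨x.pivot h, (partner_ne_pivot h).symm, _, pivotPos_le_len h, (vert_partnerPos h).symm⟩

variable (x) in
def tailSwap : System V r N := x.swapAt (x.pivot h) (x.partner h) (x.pivotPos h) (x.partnerPos h)

lemma tailSwap_ne : x.tailSwap h ≠ x := fun heq => (partner_ne_pivot h).symm <|
  Equiv.swap_eq_one_iff.1 (mul_eq_left.1 (congrArg Prod.fst heq))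

end choice

section tailSwap

variable [Zero R] {M : Matrix V V R} {I J : Fin r → V} {x : System V r N}

theorem IsAdmissible.injOn (hB : WalksBoundedBy M I J N) (hx : x.IsAdmissible M I J)
    (c : Fin r) : Set.InjOn (x.2 c).vert (Set.Iic (x.2 c).len) :=
  (hx c).injOn fun l g hg => hB c (x.1 c) l g hg

variable (hB : WalksBoundedBy M I J N) (hx : x.IsAdmissible M I J) (h : ¬ x.IsDisjoint)
include hB hx h

theorem canSwapAt_pivot :
    x.CanSwapAt (x.pivot h) (x.partner h) (x.pivotPos h) (x.partnerPos h) := by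
  have hv : (x.2 (x.pivot h)).vert (x.pivotPos h) = (x.2 (x.partner h)).vert (x.partnerPos h) :=
    (vert_partnerPos h).symm
  exact ⟨(partner_ne_pivot h).symm, hv, pivotPos_le_len h, partnerPos_le_len h,
    hB _ _ _ _ ((hx _).splice (hx _) hv (pivotPos_le_len h) (partnerPos_le_len h)),
    hB _ _ _ _ ((hx _).splice (hx _) hv.symm (partnerPos_le_len h) (pivotPos_le_len h))⟩

lemma partnerPos_le_len_tailSwap :
    x.partnerPos h ≤ ((x.tailSwap h).2 (x.pivot h)).len := by
  rw [tailSwap, len_swapAt_left (canSwapAt_pivot hB hx h)]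
  omega

lemma meetsAt_tailSwap : (x.tailSwap h).MeetsAt (x.pivot h) (x.partnerPos h) := by
  have hc := canSwapAt_pivot hB hx h
  refine ⟨x.partner h, partner_ne_pivot h, x.pivotPos h, ?_, ?_⟩
  · rw [tailSwap, len_swapAt_right hc]
    omega
  · rw [tailSwap, vert_swapAt_right_of_le hc le_rfl, vert_swapAt_left_of_le hc le_rfl,
      hc.vert_eq]

lemma not_isDisjoint_tailSwap : ¬ (x.tailSwap h).IsDisjoint := fun hd =>
  hd _ _ (partnerPos_le_len_tailSwap hB hx h) (meetsAt_tailSwap hB hx h)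

lemma meetsAt_of_meetsAt_tailSwap {c : Fin r} {n : ℕ} (hca : c ≠ x.pivot h)
    (hcb : c ≠ x.partner h) (hm : (x.tailSwap h).MeetsAt c n) : x.MeetsAt c n := by
  obtain ⟨d, hdc, m, hm, hv⟩ := hm
  rw [tailSwap, swapAt_snd_of_ne hca hcb] at hv
  obtain ⟨e, hed, k, hk, hke⟩ := exists_vert_eq_of_swapAt (canSwapAt_pivot hB hx h) hm
  refine ⟨e, ?_, k, hk, hke.trans hv⟩
  rintro rfl
  rcases hed with rfl | rfl | rfl
  exacts [hdc rfl, hca rfl, hcb rfl]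

variable (h' : ¬ (x.tailSwap h).IsDisjoint)

theorem pivot_tailSwap : (x.tailSwap h).pivot h' = x.pivot h := by
  refine (min'_eq_iff _ _ _).2 ⟨mem_meetingPaths.2 ⟨_, partnerPos_le_len_tailSwap hB hx h,
    meetsAt_tailSwap hB hx h⟩, fun c hc => ?_⟩
  by_contra! hlt
  have hca : c ≠ x.pivot h := hlt.ne
  have hcb : c ≠ x.partner h := (hlt.trans (pivot_lt_partner h)).ne
  obtain ⟨n, hn, hm⟩ := mem_meetingPaths.1 hc
  rw [tailSwap, swapAt_snd_of_ne hca hcb] at hn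
  exact hlt.not_ge (min'_le _ _ (mem_meetingPaths.2
    ⟨n, hn, meetsAt_of_meetsAt_tailSwap hB hx h hca hcb hm⟩))

theorem pivotPos_tailSwap : (x.tailSwap h).pivotPos h' = x.partnerPos h := by
  have hc := canSwapAt_pivot hB hx h
  rw [pivotPos, max'_eq_iff, pivot_tailSwap hB hx h h']
  refine ⟨mem_meetingPositions.2
    ⟨partnerPos_le_len_tailSwap hB hx h, meetsAt_tailSwap hB hx h⟩, fun n hn => ?_⟩
  obtain ⟨hn, d, hda, q, hq, hv⟩ := mem_meetingPositions.1 hn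
  by_contra! htn
  rw [tailSwap, len_swapAt_left hc] at hn
  rw [tailSwap, vert_swapAt_left_of_ge hc htn.le hn] at hv
  rw [tailSwap] at hq
  have hm : x.pivotPos h + (n - x.partnerPos h) ≤ (x.2 (x.pivot h)).len := by
    have := hc.le_len_left
    omega
  -- beyond `partnerPos` the new pivot path is the old one beyond `pivotPos`, which meets no other
  -- old path and, being injective, not its own initial segment now carried by the partner
  suffices x.MeetsAt (x.pivot h) (x.pivotPos h + (n - x.partnerPos h)) by
    have : x.pivotPos h + (n - x.partnerPos h) ≤ x.pivotPos h :=
      le_max' _ _ (mem_meetingPositions.2 ⟨hm, this⟩)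
    omega
  by_cases hdb : d = x.partner h
  · subst hdb
    rw [len_swapAt_right hc] at hq
    rcases le_total q (x.pivotPos h) with hqs | hsq
    · rw [vert_swapAt_right_of_le hc hqs] at hv
      have := hx.injOn hB _ (Set.mem_Iic.2 (hqs.trans hc.le_len_left)) (Set.mem_Iic.2 hm) hv
      omega
    · rw [vert_swapAt_right_of_ge hc hsq hq] at hv
      exact ⟨_, hc.ne.symm, _, by have := hc.le_len_right; omega, hv⟩
  · rw [swapAt_snd_of_ne hda hdb] at hq hv
    exact ⟨d, hda, q, hq, hv⟩

theorem pivotVert_tailSwap : (x.tailSwap h).pivotVert h' = x.pivotVert h := by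
  rw [pivotVert, pivot_tailSwap hB hx h h', pivotPos_tailSwap hB hx h h', tailSwap,
    vert_swapAt_left_of_le (canSwapAt_pivot hB hx h) le_rfl, vert_partnerPos]

theorem partner_tailSwap : (x.tailSwap h).partner h' = x.partner h := by
  have hc := canSwapAt_pivot hB hx h
  rw [partner, min'_eq_iff, pivot_tailSwap hB hx h h', pivotVert_tailSwap hB hx h h']
  refine ⟨mem_partners.2 ⟨hc.ne.symm, x.pivotPos h, ?_, ?_⟩, fun d hd => ?_⟩
  · rw [tailSwap, len_swapAt_right hc]
    omega
  · rw [tailSwap, vert_swapAt_right_of_le hc le_rfl]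
    rfl
  · obtain ⟨hda, m, hm, hv⟩ := mem_partners.1 hd
    by_cases hdb : d = x.partner h
    · exact hdb.ge
    rw [tailSwap, swapAt_snd_of_ne hda hdb] at hm hv
    exact min'_le _ _ (mem_partners.2 ⟨hda, m, hm, hv⟩)

theorem partnerPos_tailSwap : (x.tailSwap h).partnerPos h' = x.pivotPos h := by
  have hc := canSwapAt_pivot hB hx h
  rw [partnerPos, min'_eq_iff, partner_tailSwap hB hx h h', pivotVert_tailSwap hB hx h h']
  refine ⟨mem_visits.2 ⟨?_, ?_⟩, fun m hm => ?_⟩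
  · rw [tailSwap, len_swapAt_right hc]
    omega
  · rw [tailSwap, vert_swapAt_right_of_le hc le_rfl]
    rfl
  · obtain ⟨-, hv⟩ := mem_visits.1 hm
    by_contra! hms
    rw [tailSwap, vert_swapAt_right_of_le hc hms.le] at hv
    exact hms.ne (hx.injOn hB _ (Set.mem_Iic.2 (hms.le.trans hc.le_len_left))
      (Set.mem_Iic.2 hc.le_len_left) hv)

theorem tailSwap_tailSwap : (x.tailSwap h).tailSwap h' = x := by
  rw [tailSwap.eq_1 (x.tailSwap h) h', pivot_tailSwap hB hx h h', partner_tailSwap hB hx h h',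
    pivotPos_tailSwap hB hx h h', partnerPos_tailSwap hB hx h h', tailSwap]
  exact swapAt_swapAt (canSwapAt_pivot hB hx h)

end tailSwap

theorem sum_isAdmissible_eq_sum_isDisjoint [Fintype V] [CommRing R] {M : Matrix V V R}
    {I J : Fin r → V} (hB : WalksBoundedBy M I J N) :
    ∑ x : System V r N with x.IsAdmissible M I J, x.signedWeight M =
      ∑ x : System V r N with x.IsAdmissible M I J ∧ x.IsDisjoint, x.signedWeight M := by
  have hcancel : ∑ x : System V r N with x.IsAdmissible M I J ∧ ¬ x.IsDisjoint,
      x.signedWeight M = 0 := by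
    refine sum_involution (fun x hx => x.tailSwap (mem_filter.1 hx).2.2) (fun x hx => ?_)
      (fun x _ _ => tailSwap_ne _) (fun x hx => ?_) (fun x hx => ?_)
    all_goals obtain ⟨hx, h⟩ := (mem_filter.1 hx).2
    · rw [tailSwap, signedWeight_swapAt (canSwapAt_pivot hB hx h), add_neg_cancel]
    · exact mem_filter.2 ⟨mem_univ _, isAdmissible_swapAt (canSwapAt_pivot hB hx h) hx,
        not_isDisjoint_tailSwap hB hx h⟩
    · exact tailSwap_tailSwap hB hx h _
  rw [← sum_filter_add_sum_filter_not _ IsDisjoint, filter_filter, filter_filter, hcancel,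
    add_zero]

def rebound {N' : ℕ} (x : System V r N) : System V r N' := (x.1, fun a => (x.2 a).rebound)

section rebound

variable {N' : ℕ} {x : System V r N} (hx : ∀ a, (x.2 a).len ≤ N')
include hx

lemma isAdmissible_rebound [Zero R] {M : Matrix V V R} {I J : Fin r → V} :
    (x.rebound : System V r N').IsAdmissible M I J ↔ x.IsAdmissible M I J := by
  simp [IsAdmissible, rebound, Walk.len_rebound, Walk.vert_rebound, hx]

lemma isDisjoint_rebound : (x.rebound : System V r N').IsDisjoint ↔ x.IsDisjoint := by
  simp [IsDisjoint, MeetsAt, rebound, Walk.len_rebound, Walk.vert_rebound, hx]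

lemma injOn_rebound (a : Fin r) :
    Set.InjOn ((x.rebound : System V r N').2 a).vert (Set.Iic ((x.rebound : System V r N').2 a).len)
      ↔ Set.InjOn (x.2 a).vert (Set.Iic (x.2 a).len) := by
  simp [rebound, Walk.len_rebound, Walk.vert_rebound, hx]

lemma signedWeight_rebound [CommRing R] (M : Matrix V V R) :
    (x.rebound : System V r N').signedWeight M = x.signedWeight M := by
  simp [signedWeight, rebound, Walk.weight, Walk.len_rebound, Walk.vert_rebound, hx]

lemma rebound_rebound : ((x.rebound : System V r N').rebound : System V r N) = x := by
  simp [rebound, Walk.rebound_rebound, hx]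

end rebound

lemma isLinking_iff [Fintype V] {M : Matrix V V ℝ} {I J : Fin r ↪ V}
    (y : System V r (Fintype.card V)) :
    IsLinking M I J y ↔
      y.IsAdmissible M I J ∧ y.IsDisjoint ∧
        ∀ a, Set.InjOn (y.2 a).vert (Set.Iic (y.2 a).len) := by
  have hdisj :
      (∀ a b : Fin r, a ≠ b → ∀ s t, (y.2 a).2 s ≠ (y.2 b).2 t) ↔ y.IsDisjoint := by
    refine ⟨fun hd a n hn ⟨b, hba, m, hm, hv⟩ => ?_, fun hd a b hab s t hst => ?_⟩
    · have := hd b a hba ⟨m, Nat.lt_succ_of_le hm⟩ ⟨n, Nat.lt_succ_of_le hn⟩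
      rw [← Walk.vert_coe, ← Walk.vert_coe] at this
      exact this hv
    · refine hd b t (Nat.lt_succ_iff.mp t.isLt) ⟨a, hab, s, Nat.lt_succ_iff.mp s.isLt, ?_⟩
      rwa [Walk.vert_coe, Walk.vert_coe]
  simp only [IsLinking, IsAdmissible, IsWalk, Walk.injective_iff_injOn, Walk.vert_zero,
    Walk.vert_len, Walk.forall_fin_edge_iff, hdisj, forall_and]
  tauto

theorem sum_isDisjoint_eq_sum_isLinking [Fintype V] {M : Matrix V V ℝ} {I J : Fin r ↪ V}
    (hB : WalksBoundedBy M I J N) :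
    ∑ x : System V r N with x.IsAdmissible M I J ∧ x.IsDisjoint, x.signedWeight M =
      ∑ y : {y : LinkDatum V r // IsLinking M I J y},
        ((Equiv.Perm.sign y.1.1 : ℤ) : ℝ) * linkWeight M y.1 := by
  rw [← sum_subtype {y | IsLinking M I J y} (by simp)
    (fun y : LinkDatum V r => ((Equiv.Perm.sign y.1 : ℤ) : ℝ) * linkWeight M y)]
  have hshort :
      ∀ x : System V r N, x.IsAdmissible M I J → ∀ a, (x.2 a).len < Fintype.card V :=
    fun x hx a => Walk.len_lt_card (hx.injOn hB a)
  have hbound :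
      ∀ y : System V r (Fintype.card V), y.IsAdmissible M I J → ∀ a, (y.2 a).len ≤ N :=
    fun y hy a => hB a (y.1 a) _ _ (hy a)
  refine sum_nbij' rebound rebound (fun x hx => ?_) (fun y hy => ?_) (fun x hx => ?_)
    (fun y hy => ?_) (fun x hx => ?_)
  · simp only [mem_filter, mem_univ, true_and] at hx ⊢
    have hl a := (hshort x hx.1 a).le
    rw [isLinking_iff, isAdmissible_rebound hl, isDisjoint_rebound hl]
    exact ⟨hx.1, hx.2, fun a => (injOn_rebound hl a).2 (hx.1.injOn hB a)⟩
  · simp only [mem_filter, mem_univ, true_and] at hy ⊢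
    obtain ⟨hadm, hdisj, -⟩ := (isLinking_iff y).1 hy
    rw [isAdmissible_rebound (hbound y hadm), isDisjoint_rebound (hbound y hadm)]
    exact ⟨hadm, hdisj⟩
  · simp only [mem_filter, mem_univ, true_and] at hx
    exact rebound_rebound fun a => (hshort x hx.1 a).le
  · simp only [mem_filter, mem_univ, true_and] at hy
    exact rebound_rebound (hbound y ((isLinking_iff y).1 hy).1)
  · simp only [mem_filter, mem_univ, true_and] at hx
    rw [← signedWeight_rebound (fun a => (hshort x hx.1 a).le) M, signedWeight, linkWeight]
    simp only [Walk.prod_fin_eq_weight]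

end System

end LGV

end

/-- Lindström–Gessel–Viennot: Let `M` be the weighted adjacency matrix of a
digraph in which every walk (along nonzero-weight edges) from the source set `J` to the
sink set `I` has length at most `L`.  Let `W = ∑_{k=0}^{L} M^k` be the matrix of total
walk weights.  Then the determinant of the square submatrix `W(I, J)` equals the signed
sum, over all vertex-disjoint path systems (linkings) from `J` onto `I`, of the products
of edge weights: non-vertex-disjoint path systems cancel in pairs. -/
theorem stmt7 {V : Type*} [Fintype V] [DecidableEq V] {r L : ℕ}
    (M : Matrix V V ℝ) (I J : Fin r ↪ V)
    (hBound : ∀ k : ℕ, L < k → ∀ f : Fin (k + 1) → V,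
      (∀ t : Fin k, M (f t.succ) (f t.castSucc) ≠ 0) →
      ¬(f 0 ∈ Set.range J ∧ f (Fin.last k) ∈ Set.range I)) :
    ((∑ k ∈ Finset.range (L + 1), M ^ k).submatrix (fun a => I a) (fun b => J b)).det
      = ∑ x : {x : LinkDatum V r // IsLinking M I J x},
          ((Equiv.Perm.sign (x : LinkDatum V r).1 : ℤ) : ℝ) * linkWeight M (x : LinkDatum V r) := by
  have hB := LGV.walksBoundedBy_of_forall_fin hBound
  rw [LGV.System.det_eq_sum_isAdmissible, LGV.System.sum_isAdmissible_eq_sum_isDisjoint hB,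
    LGV.System.sum_isDisjoint_eq_sum_isLinking hB]
end

section
/- Let G_c be a colored union graph on n state vertices and suppose there exist n S-disjoint edges E_S (distinct heads covering all state vertices, and edges with the same tail have distinct colors) such that every state vertex is input-reachable. Then the edge set E_S decomposes into a vertex-disjoint union of generalized stems and generalized buds covering all n state vertices. -/
/-- The vertex set of a colored edge set. -/
def gcVerts {V : Type*} [DecidableEq V] {N : ℕ} (P : Finset (V × V × Fin N)) :
    Finset V :=
  P.image (fun e => e.1) ∪ P.image (fun e => e.2.1)

/-- The edge relation of a colored edge set (ignoring colors). -/
def gcRel {V : Type*} {N : ℕ} (P : Finset (V × V × Fin N)) (x y : V) : Prop :=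
  ∃ c : Fin N, (x, y, c) ∈ P

/-- `x` is input-reachable in the colored graph with edge set `E` and input vertex
set `U`: there is a directed path from some input vertex to `x`. -/
def InputReachable {V : Type*} {N : ℕ} (E : Finset (V × V × Fin N))
    (U : Finset V) (x : V) : Prop :=
  ∃ u ∈ U, Relation.ReflTransGen (gcRel E) u x

/-- The colored edge set `P` contains a directed cycle (a nonempty closed walk). -/
def gcHasCycle {V : Type*} {N : ℕ} (P : Finset (V × V × Fin N)) : Prop :=
  ∃ (v : V) (l : List V), l ≠ [] ∧ List.Chain (gcRel P) v l ∧ l.getLast? = some v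

/-- A directed cycle in `P`, given by its (nonempty, repetition-free) vertex list. -/
def gcIsCycle {V : Type*} {N : ℕ} (P : Finset (V × V × Fin N)) (l : List V) : Prop :=
  l ≠ [] ∧ l.Nodup ∧ List.Chain' (gcRel P) l ∧
    ∃ a b : V, l.head? = some a ∧ l.getLast? = some b ∧ gcRel P b a

/-- The edges of `P` are S-disjoint: their heads are all distinct, and edges sharing
the same tail have different color indices. -/
def SDisjoint {V : Type*} {N : ℕ} (P : Finset (V × V × Fin N)) : Prop :=
  ∀ e ∈ P, ∀ e' ∈ P, e ≠ e' → e.2.1 ≠ e'.2.1 ∧ (e.1 = e'.1 → e.2.2 ≠ e'.2.2)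

/-- A generalized stem (with input vertex set `U` and state vertex set `X`):
exactly one input vertex, no cycle, every state vertex of it has exactly one
ingoing edge (and no edge enters an input vertex), and its edges are S-disjoint. -/
def IsGenStem {V : Type*} [DecidableEq V] {N : ℕ} (U X : Finset V)
    (P : Finset (V × V × Fin N)) : Prop :=
  (∃! u : V, u ∈ gcVerts P ∧ u ∈ U) ∧
  ¬ gcHasCycle P ∧
  (∀ e ∈ P, e.2.1 ∉ U) ∧
  (∀ x ∈ gcVerts P, x ∈ X → (P.filter fun e => e.2.1 = x).card = 1) ∧
  SDisjoint P

/-- A generalized bud (inside the colored union graph `E` with input vertices `U`):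
no input vertex, exactly one cycle, every vertex input-reachable in `E`, every vertex
has exactly one ingoing edge, and its edges are S-disjoint. -/
def IsGenBud {V : Type*} [DecidableEq V] {N : ℕ} (E : Finset (V × V × Fin N))
    (U : Finset V) (P : Finset (V × V × Fin N)) : Prop :=
  (∀ v ∈ gcVerts P, v ∉ U) ∧
  (∃ l : List V, gcIsCycle P l) ∧
  (∀ l l' : List V, gcIsCycle P l → gcIsCycle P l' → l.toFinset = l'.toFinset) ∧
  (∀ v ∈ gcVerts P, InputReachable E U v) ∧
  (∀ x ∈ gcVerts P, (P.filter fun e => e.2.1 = x).card = 1) ∧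
  SDisjoint P

/-!
Since the heads of the edges of `ES` are distinct, each state vertex has a unique parent, the tail
of the edge entering it, while an input vertex, which no edge enters, is a fixed point: `ES` is
the functional graph of the map `parent ES`. Its connected components are the classes of the
relation "the forward orbits meet", and by finiteness each class carries exactly one periodic
orbit. If the class contains an input vertex, that orbit is the input itself, so the component
has one input and no cycle: it is a stem. Otherwise all its vertices are state vertices, every
one of them is entered by an edge of the component, and the periodic orbit is its unique cycle:
it is a bud.
-/

open Function

namespace Function

variable {α : Type*} {f : α → α} {x y z : α}

def OrbitsMeet (f : α → α) (x y : α) : Prop := ∃ i j, f^[i] x = f^[j] y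

theorem OrbitsMeet.refl (f : α → α) (x : α) : OrbitsMeet f x x := ⟨0, 0, rfl⟩

theorem OrbitsMeet.symm (h : OrbitsMeet f x y) : OrbitsMeet f y x :=
  let ⟨i, j, h⟩ := h; ⟨j, i, h.symm⟩

theorem OrbitsMeet.trans (hxy : OrbitsMeet f x y) (hyz : OrbitsMeet f y z) :
    OrbitsMeet f x z := by
  obtain ⟨i, j, hxy⟩ := hxy
  obtain ⟨k, l, hyz⟩ := hyz
  refine ⟨k + i, j + l, ?_⟩
  rw [iterate_add_apply, hxy, ← iterate_add_apply, add_comm, iterate_add_apply, hyz,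
    ← iterate_add_apply]

theorem orbitsMeet_apply_left (f : α → α) (x : α) : OrbitsMeet f (f x) x := ⟨0, 1, rfl⟩

theorem OrbitsMeet.exists_iterate_eq (h : OrbitsMeet f x y) (hx : x ∈ periodicPts f) :
    ∃ m, f^[m] y = x := by
  obtain ⟨i, j, hij⟩ := h
  obtain ⟨n, hn, hper⟩ := mem_periodicPts.1 hx
  refine ⟨n * i - i + j, ?_⟩
  rw [iterate_add_apply, ← hij, ← iterate_add_apply,
    Nat.sub_add_cancel (Nat.le_mul_of_pos_left i hn), (hper.mul_const i).eq]

theorem OrbitsMeet.periodicOrbit_eq (h : OrbitsMeet f x y) (hx : x ∈ periodicPts f)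
    (hy : y ∈ periodicPts f) : periodicOrbit f x = periodicOrbit f y := by
  obtain ⟨m, rfl⟩ := h.exists_iterate_eq hx
  exact periodicOrbit_apply_iterate_eq hy m

theorem exists_iterate_mem_periodicPts [Finite α] (f : α → α) (x : α) :
    ∃ i, f^[i] x ∈ periodicPts f := by
  obtain ⟨i, j, hij, h⟩ :=
    Set.Finite.exists_lt_map_eq_of_forall_mem (fun n => Set.mem_univ (f^[n] x)) Set.finite_univ
  refine ⟨i, mk_mem_periodicPts (Nat.sub_pos_of_lt hij) ?_⟩
  rw [IsPeriodicPt, IsFixedPt, ← iterate_add_apply, Nat.sub_add_cancel hij.le, h]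

end Function

namespace List

variable {α : Type*}

theorem IsChain.eq_iterate {f : α → α} {a : α} {l : List α}
    (h : IsChain (fun x y => f x = y) (a :: l)) : a :: l = iterate f a (l.length + 1) :=
  ext_getElem (by simp) fun i hi _ => by
    rw [getElem_iterate]
    exact (h.iterate_eq_of_apply_eq i hi).symm

theorem IsChain.exists_rel_of_mem {R : α → α → Prop} :
    ∀ {a : α} {l : List α}, IsChain R (a :: l) → ∀ y ∈ l, ∃ x, R x y
  | _, [], _, _, hy => absurd hy not_mem_nil
  | a, b :: l, h, y, hy => by
    rw [isChain_cons_cons] at h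
    rcases mem_cons.1 hy with rfl | hy
    · exact ⟨a, h.1⟩
    · exact h.2.exists_rel_of_mem y hy

theorem IsChain.periodicOrbit_of_closed {R : α → α → Prop} {f : α → α}
    (hf : ∀ a b, R a b → f b = a) {v : α} {l : List α} (hl : IsChain R (v :: l))
    (hv : l.getLast? = some v) :
    v ∈ periodicPts f ∧ ∀ y, y ∈ l ↔ y ∈ periodicOrbit f v := by
  obtain ⟨l, rfl⟩ := getLast?_eq_some_iff.1 hv
  have hrev : IsChain (fun x y => f x = y) (v :: (l.reverse ++ [v])) := by
    simpa using isChain_reverse.2 (hl.imp fun a b hab => hf a b hab)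
  have hiter := hrev.eq_iterate
  have hper : IsPeriodicPt f (l.length + 1) v := by
    have := congrArg (·[l.length + 1]?) hiter
    rw [getElem?_iterate _ _ _ _ (by simp)] at this
    simpa [IsPeriodicPt, IsFixedPt, iterate_succ_apply] using this.symm
  have hperiodic := mk_mem_periodicPts l.length.succ_pos hper
  refine ⟨hperiodic, fun y => ?_⟩
  have hmem : y ∈ l ++ [v] ↔ y ∈ v :: (l.reverse ++ [v]) := by simp [or_comm]
  rw [mem_periodicOrbit_iff hperiodic, hmem, hiter, mem_iterate]
  constructor
  · rintro ⟨m, -, rfl⟩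
    exact ⟨m, rfl⟩
  · rintro ⟨m, rfl⟩
    exact ⟨m % (l.length + 1), by simpa using Nat.lt_succ_of_lt (m.mod_lt l.length.succ_pos),
      (hper.iterate_mod_apply m).symm⟩

end List

section ColoredGraph

variable {V : Type*} {N : ℕ} {ES P : Finset (V × V × Fin N)} {e : V × V × Fin N} {a b v w : V}

theorem mem_gcVerts [DecidableEq V] : v ∈ gcVerts P ↔ ∃ e ∈ P, e.1 = v ∨ e.2.1 = v := by
  simp only [gcVerts, Finset.mem_union, Finset.mem_image, ← exists_or, ← and_or_left]

theorem gcRel.left_mem_gcVerts [DecidableEq V] (h : gcRel P a b) : a ∈ gcVerts P :=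
  let ⟨_, hc⟩ := h; mem_gcVerts.2 ⟨_, hc, .inl rfl⟩

theorem gcRel.right_mem_gcVerts [DecidableEq V] (h : gcRel P a b) : b ∈ gcVerts P :=
  let ⟨_, hc⟩ := h; mem_gcVerts.2 ⟨_, hc, .inr rfl⟩

theorem SDisjoint.mono (hS : SDisjoint ES) (hP : P ⊆ ES) : SDisjoint P :=
  fun e he e' he' hne => hS e (hP he) e' (hP he') hne

theorem SDisjoint.card_filter_head_eq_one [DecidableEq V] (hS : SDisjoint P) (he : e ∈ P) :
    (P.filter fun e' => e'.2.1 = e.2.1).card = 1 := by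
  refine Finset.card_eq_one.2 ⟨e, Finset.ext fun e' => ?_⟩
  simp only [Finset.mem_filter, Finset.mem_singleton]
  refine ⟨fun ⟨he', hhead⟩ => ?_, by rintro rfl; exact ⟨he, rfl⟩⟩
  by_contra hne
  exact (hS e' he' e he hne).1 hhead

theorem gcIsCycle_iterate_reverse {f : V → V} {z : V} (hz : z ∈ periodicPts f)
    (hrel : ∀ j, gcRel P (f^[j + 1] z) (f^[j] z)) :
    gcIsCycle P (List.iterate f z (minimalPeriod f z)).reverse := by
  obtain ⟨k, hk⟩ : ∃ k, minimalPeriod f z = k + 1 :=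
    Nat.exists_eq_succ_of_ne_zero (minimalPeriod_pos_of_mem_periodicPts hz).ne'
  have hnodup : (List.iterate f z (minimalPeriod f z)).Nodup := by
    rw [← List.range_map_iterate]
    exact Cycle.nodup_coe_iff.1 nodup_periodicOrbit
  refine ⟨by simp [hk], List.nodup_reverse.2 hnodup, ?_, f^[k] z, z, ?_, ?_, ?_⟩
  · refine List.isChain_reverse.2 (List.isChain_iff_getElem.2 fun i hi => ?_)
    simpa using hrel i
  · rw [List.head?_reverse, List.getLast?_eq_getElem?, List.length_iterate, hk,
      List.getElem?_iterate _ _ _ _ (by omega), Nat.add_sub_cancel]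
  · simp [List.getLast?_reverse, hk]
  · have := hrel k
    rwa [← hk, iterate_minimalPeriod] at this

theorem exists_periodicOrbit_of_gcIsCycle [DecidableEq V] {f : V → V}
    (hf : ∀ a b, gcRel P a b → f b = a) {l : List V} (hl : gcIsCycle P l) :
    ∃ b ∈ gcVerts P, b ∈ periodicPts f ∧ ∀ y, y ∈ l ↔ y ∈ periodicOrbit f b := by
  obtain ⟨-, -, hch, a, b, ha, hb, hba⟩ := hl
  have hwalk : List.IsChain (gcRel P) (b :: l) := hch.cons (by simpa [ha] using hba)
  exact ⟨b, hba.left_mem_gcVerts, hwalk.periodicOrbit_of_closed hf hb⟩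

open Classical in
noncomputable def parent (ES : Finset (V × V × Fin N)) (v : V) : V :=
  if h : ∃ e ∈ ES, e.2.1 = v then h.choose.1 else v

theorem SDisjoint.parent_eq (hS : SDisjoint ES) (he : e ∈ ES) : parent ES e.2.1 = e.1 := by
  have h : ∃ e' ∈ ES, e'.2.1 = e.2.1 := ⟨e, he, rfl⟩
  rw [parent, dif_pos h]
  obtain ⟨hmem, hhead⟩ := h.choose_spec
  by_contra hne
  exact (hS _ hmem e he fun h' => hne (by rw [h'])).1 hhead

theorem parent_eq_self (h : ∀ e ∈ ES, e.2.1 ≠ v) : parent ES v = v := by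
  rw [parent, dif_neg]
  rintro ⟨e, he, hv⟩
  exact h e he hv

theorem SDisjoint.parent_eq_of_gcRel (hS : SDisjoint ES) (hP : P ⊆ ES) (h : gcRel P a b) :
    parent ES b = a :=
  hS.parent_eq (hP h.choose_spec)

open Classical in
noncomputable def component (ES : Finset (V × V × Fin N)) (w : V) : Finset (V × V × Fin N) :=
  ES.filter fun e => OrbitsMeet (parent ES) e.2.1 w

theorem mem_component : e ∈ component ES w ↔ e ∈ ES ∧ OrbitsMeet (parent ES) e.2.1 w := by
  classical exact Finset.mem_filter

theorem component_subset : component ES w ⊆ ES := fun _ he => (mem_component.1 he).1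

theorem self_mem_component (he : e ∈ ES) : e ∈ component ES e.2.1 :=
  mem_component.2 ⟨he, .refl _ _⟩

theorem component_eq_of_orbitsMeet {w' : V} (h : OrbitsMeet (parent ES) w w') :
    component ES w = component ES w' := by
  ext e
  simp only [mem_component]
  exact and_congr_right fun _ => ⟨fun h' => h'.trans h, fun h' => h'.trans h.symm⟩

theorem sup_image_component [DecidableEq V] (ES : Finset (V × V × Fin N)) :
    (ES.image fun e => component ES e.2.1).sup id = ES := by
  rw [Finset.sup_image]
  exact le_antisymm (Finset.sup_le fun _ _ => component_subset)
    fun e he => Finset.mem_sup.2 ⟨e, he, self_mem_component he⟩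

variable [DecidableEq V]

theorem SDisjoint.orbitsMeet_of_mem_gcVerts_component (hS : SDisjoint ES)
    (hv : v ∈ gcVerts (component ES w)) : OrbitsMeet (parent ES) v w := by
  obtain ⟨e, he, rfl | rfl⟩ := mem_gcVerts.1 hv
  · rw [← hS.parent_eq (component_subset he)]
    exact (orbitsMeet_apply_left _ _).trans (mem_component.1 he).2
  · exact (mem_component.1 he).2

theorem SDisjoint.mem_component_of_head_mem_gcVerts (hS : SDisjoint ES) (he : e ∈ ES)
    (hv : e.2.1 ∈ gcVerts (component ES w)) : e ∈ component ES w :=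
  mem_component.2 ⟨he, hS.orbitsMeet_of_mem_gcVerts_component hv⟩

theorem SDisjoint.disjoint_gcVerts_component (hS : SDisjoint ES) {w' : V}
    (hne : component ES w ≠ component ES w') :
    Disjoint (gcVerts (component ES w)) (gcVerts (component ES w')) :=
  Finset.disjoint_left.2 fun _ hv hv' => hne <| component_eq_of_orbitsMeet <|
    (hS.orbitsMeet_of_mem_gcVerts_component hv).symm.trans
      (hS.orbitsMeet_of_mem_gcVerts_component hv')

variable {U X : Finset V}

theorem isGenStem_component (hUX : Disjoint U X) (hhead : ∀ e ∈ ES, e.2.1 ∈ X)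
    (hcover : ∀ x ∈ X, ∃ e ∈ ES, e.2.1 = x) (hS : SDisjoint ES) {u : V}
    (hu : u ∈ gcVerts (component ES w)) (huU : u ∈ U) : IsGenStem U X (component ES w) := by
  have hheadU : ∀ e ∈ ES, e.2.1 ∉ U := fun e he h => Finset.disjoint_left.1 hUX h (hhead e he)
  have hfix : ∀ u ∈ U, IsFixedPt (parent ES) u :=
    fun u hu => parent_eq_self fun e he h => hheadU e he (h ▸ hu)
  have hunique : ∀ v ∈ gcVerts (component ES w), v ∈ periodicPts (parent ES) → v = u := by
    intro v hv hper
    have hmeet := (hS.orbitsMeet_of_mem_gcVerts_component hv).trans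
      (hS.orbitsMeet_of_mem_gcVerts_component hu).symm
    obtain ⟨m, hm⟩ := hmeet.exists_iterate_eq hper
    rw [iterate_fixed (hfix u huU)] at hm
    exact hm.symm
  refine ⟨⟨u, ⟨hu, huU⟩, fun u' ⟨hu', hu'U⟩ => hunique u' hu' ?_⟩, ?_,
    fun e he => hheadU e (component_subset he), fun x hx hxX => ?_, hS.mono component_subset⟩
  · exact mk_mem_periodicPts one_pos ((hfix u' hu'U).isPeriodicPt 1)
  · rintro ⟨v, l, -, hwalk, hlast⟩
    obtain ⟨hper, hmem⟩ := List.IsChain.periodicOrbit_of_closed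
      (fun _ _ h => hS.parent_eq_of_gcRel component_subset h) hwalk hlast
    obtain ⟨x, hxv⟩ := hwalk.exists_rel_of_mem v ((hmem v).2 (self_mem_periodicOrbit hper))
    have hvu := hunique v hxv.right_mem_gcVerts hper
    obtain ⟨c, hc⟩ := hxv
    exact hheadU _ (component_subset hc) (hvu ▸ huU)
  · obtain ⟨e, he, rfl⟩ := hcover x hxX
    exact (hS.mono component_subset).card_filter_head_eq_one
      (hS.mem_component_of_head_mem_gcVerts he hx)

theorem isGenBud_component [Finite V] {E : Finset (V × V × Fin N)}
    (hends : ∀ e ∈ ES, e.1 ∈ U ∪ X ∧ e.2.1 ∈ X) (hcover : ∀ x ∈ X, ∃ e ∈ ES, e.2.1 = x)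
    (hS : SDisjoint ES) (hreach : ∀ x ∈ X, InputReachable E U x) (he : e ∈ ES)
    (hU : ∀ v ∈ gcVerts (component ES e.2.1), v ∉ U) : IsGenBud E U (component ES e.2.1) := by
  set P := component ES e.2.1
  have hX : ∀ v ∈ gcVerts P, v ∈ X := by
    intro v hv
    obtain ⟨g, hg, rfl | rfl⟩ := mem_gcVerts.1 hv
    · exact (Finset.mem_union.1 (hends g (component_subset hg)).1).resolve_left (hU _ hv)
    · exact (hends g (component_subset hg)).2
  have hin : ∀ v ∈ gcVerts P, ∃ g ∈ P, g.2.1 = v := by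
    intro v hv
    obtain ⟨g, hg, rfl⟩ := hcover v (hX v hv)
    exact ⟨g, hS.mem_component_of_head_mem_gcVerts hg hv, rfl⟩
  have hparent : ∀ a b, gcRel P a b → parent ES b = a :=
    fun _ _ h => hS.parent_eq_of_gcRel component_subset h
  have hrel : ∀ v ∈ gcVerts P, gcRel P (parent ES v) v := by
    intro v hv
    obtain ⟨g, hg, rfl⟩ := hin v hv
    rw [hS.parent_eq (component_subset hg)]
    exact ⟨g.2.2, hg⟩
  have hmaps : Set.MapsTo (parent ES) (gcVerts P) (gcVerts P) :=
    fun v hv => (hrel v hv).left_mem_gcVerts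
  have hw : e.2.1 ∈ gcVerts P := mem_gcVerts.2 ⟨e, self_mem_component he, .inr rfl⟩
  obtain ⟨i, hi⟩ := exists_iterate_mem_periodicPts (parent ES) e.2.1
  refine ⟨hU, ⟨_, gcIsCycle_iterate_reverse hi fun j => ?_⟩, fun l l' hl hl' => ?_,
    fun v hv => hreach v (hX v hv), fun v hv => ?_, hS.mono component_subset⟩
  · rw [iterate_succ_apply']
    exact hrel _ (hmaps.iterate j (hmaps.iterate i hw))
  · obtain ⟨b, hb, hbper, hl⟩ := exists_periodicOrbit_of_gcIsCycle hparent hl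
    obtain ⟨b', hb', hbper', hl'⟩ := exists_periodicOrbit_of_gcIsCycle hparent hl'
    have horbit := ((hS.orbitsMeet_of_mem_gcVerts_component hb).trans
      (hS.orbitsMeet_of_mem_gcVerts_component hb').symm).periodicOrbit_eq hbper hbper'
    ext y
    rw [List.mem_toFinset, List.mem_toFinset, hl, hl', horbit]
  · obtain ⟨g, hg, rfl⟩ := hin v hv
    exact (hS.mono component_subset).card_filter_head_eq_one hg

end ColoredGraph

theorem stmt16_general {V : Type*} [DecidableEq V] [Fintype V] {N : ℕ}
    (U X : Finset V) (hUX : Disjoint U X)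
    (E ES : Finset (V × V × Fin N)) (hESsub : ES ⊆ E)
    (hEnds : ∀ e ∈ E, e.1 ∈ U ∪ X ∧ e.2.1 ∈ X)
    (hheads : ∀ x ∈ X, ∃ e ∈ ES, e.2.1 = x)
    (hSdisj : SDisjoint ES)
    (hreach : ∀ x ∈ X, InputReachable E U x) :
    ∃ parts : Finset (Finset (V × V × Fin N)),
      (∀ P ∈ parts, P ⊆ ES) ∧
      ES = parts.sup id ∧
      (∀ P ∈ parts, ∀ Q ∈ parts, P ≠ Q → Disjoint (gcVerts P) (gcVerts Q)) ∧
      (∀ P ∈ parts, IsGenStem U X P ∨ IsGenBud E U P) ∧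
      X ⊆ parts.sup gcVerts := by
  have hEndsES : ∀ e ∈ ES, e.1 ∈ U ∪ X ∧ e.2.1 ∈ X := fun e he => hEnds e (hESsub he)
  refine ⟨ES.image fun e => component ES e.2.1, ?_, (sup_image_component ES).symm, ?_, ?_, ?_⟩
  · simp only [Finset.forall_mem_image]
    exact fun _ _ => component_subset
  · simp only [Finset.forall_mem_image]
    exact fun _ _ _ _ hne => hSdisj.disjoint_gcVerts_component hne
  · simp only [Finset.forall_mem_image]
    intro e he
    by_cases hU : ∀ v ∈ gcVerts (component ES e.2.1), v ∉ U
    · exact .inr (isGenBud_component hEndsES hheads hSdisj hreach he hU)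
    · push Not at hU
      obtain ⟨u, hu, huU⟩ := hU
      exact .inl (isGenStem_component hUX (fun e he => (hEndsES e he).2) hheads hSdisj hu huU)
  · intro x hx
    obtain ⟨e, he, rfl⟩ := hheads x hx
    exact Finset.mem_sup.2 ⟨_, Finset.mem_image_of_mem _ he,
      mem_gcVerts.2 ⟨e, self_mem_component he, .inr rfl⟩⟩

/-- if a colored union graph on `n` state vertices possesses `n`
S-disjoint edges `ES` whose (distinct) heads cover all state vertices, and every
state vertex is input-reachable, then `ES` decomposes into a vertex-disjoint union
of generalized stems and generalized buds covering all `n` state vertices. -/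
theorem stmt16 {V : Type*} [DecidableEq V] [Fintype V] {N n : ℕ}
    (U X : Finset V) (hUX : Disjoint U X) (hX : X.card = n)
    (E ES : Finset (V × V × Fin N)) (hESsub : ES ⊆ E)
    (hEnds : ∀ e ∈ E, e.1 ∈ U ∪ X ∧ e.2.1 ∈ X)
    (hcard : ES.card = n)
    (hheads : ∀ x ∈ X, ∃ e ∈ ES, e.2.1 = x)
    (hSdisj : SDisjoint ES)
    (hreach : ∀ x ∈ X, InputReachable E U x) :
    ∃ parts : Finset (Finset (V × V × Fin N)),
      (∀ P ∈ parts, P ⊆ ES) ∧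
      ES = parts.sup id ∧
      (∀ P ∈ parts, ∀ Q ∈ parts, P ≠ Q → Disjoint (gcVerts P) (gcVerts Q)) ∧
      (∀ P ∈ parts, IsGenStem U X P ∨ IsGenBud E U P) ∧
      X ⊆ parts.sup gcVerts :=
  stmt16_general U X hUX E ES hESsub hEnds hheads hSdisj hreach
end
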